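/- arXiv:2212.08762 — 2 statements merged into one kernel-verified Lean document; each statement's English description precedes it below -/
import Mathlib

section
/- Let X be a symmetric positive definite 3×3 real matrix with tr(X) = K > 0. Then tr(X⁻¹) - λ₋(X⁻¹) ≥ 6/K, with equality when all three eigenvalues of X equal K/3. -/
/-!
Diagonalising `X`, we get `tr X⁻¹ = ∑ 1/μᵢ` over the eigenvalues `μᵢ` of `X`, and the smallest
eigenvalue of `X⁻¹` is `1/max μᵢ`. The quantity is therefore the sum of the reciprocals of the two
eigenvalues other than the largest; these add up to at most `2K/3`, so by Cauchy–Schwarz their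
reciprocals add up to at least `4/(2K/3) = 6/K`.
-/

open Matrix Finset

namespace Matrix.IsHermitian

variable {𝕜 n : Type*} [RCLike 𝕜] [Fintype n] [DecidableEq n] {A : Matrix n n 𝕜}

theorem trace_cfc (hA : A.IsHermitian) (f : ℝ → ℝ) :
    (cfc f A).trace = ∑ i, (f (hA.eigenvalues i) : 𝕜) := by
  rw [hA.cfc_eq, IsHermitian.cfc, Unitary.conjStarAlgAut_apply, trace_mul_cycle,
    Unitary.coe_star_mul_self, one_mul, trace_diagonal]
  rfl

theorem cfc_inv_eq_inv (hA : A.IsHermitian) (hA' : IsUnit A) : cfc (·⁻¹ : ℝ → ℝ) A = A⁻¹ := by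
  rw [nonsing_inv_eq_ringInverse, cfc_ringInverse_id A hA' hA.isSelfAdjoint]

theorem trace_inv (hA : A.IsHermitian) (hA' : IsUnit A) :
    A⁻¹.trace = ∑ i, ((hA.eigenvalues i)⁻¹ : 𝕜) := by
  simp [← hA.cfc_inv_eq_inv hA', hA.trace_cfc]

theorem range_inv_eigenvalues (hA : A.IsHermitian) (hA' : IsUnit A) :
    Set.range hA.inv.eigenvalues = Set.range fun i => (hA.eigenvalues i)⁻¹ := by
  have hinv : ContinuousOn (·⁻¹ : ℝ → ℝ) (spectrum ℝ A) :=
    continuousOn_inv₀.mono fun _ hx ↦ ne_of_mem_of_not_mem hx (spectrum.zero_notMem ℝ hA')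
  rw [← spectrum_real_eq_range_eigenvalues, ← hA.cfc_inv_eq_inv hA',
    cfc_map_spectrum _ _ hA.isSelfAdjoint hinv, spectrum_real_eq_range_eigenvalues,
    ← Set.range_comp]
  rfl

end Matrix.IsHermitian

theorem card_mul_card_sub_one_div_sum_le_sum_inv_sub_iInf_inv {ι : Type*} [Fintype ι]
    [Nonempty ι] {μ : ι → ℝ} (hμ : ∀ i, 0 < μ i) :
    Fintype.card ι * (Fintype.card ι - 1) / ∑ i, μ i ≤ ∑ i, (μ i)⁻¹ - ⨅ i, (μ i)⁻¹ := by
  classical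
  obtain ⟨k, hk⟩ := Finite.exists_max μ
  set n : ℝ := (Fintype.card ι : ℝ)
  set S := ∑ i, μ i
  set T := ∑ i ∈ univ.erase k, μ i
  have hS : 0 < S := sum_pos (fun i _ ↦ hμ i) univ_nonempty
  have hST : S = μ k + T := (add_sum_erase _ _ (mem_univ k)).symm
  have hmax : S ≤ n * μ k := by
    simpa using sum_le_card_nsmul univ μ (μ k) fun i _ ↦ hk i
  have hcard : ((univ.erase k).card : ℝ) = n - 1 := by
    rw [card_erase_of_mem (mem_univ k), card_univ, Nat.cast_sub Fintype.card_pos, Nat.cast_one]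
  -- Titu's lemma (Cauchy–Schwarz) on the entries other than the largest one
  have htitu : (n - 1) ^ 2 / T ≤ ∑ i ∈ univ.erase k, (μ i)⁻¹ := by
    have := sq_sum_div_le_sum_sq_div (univ.erase k) (fun _ ↦ (1 : ℝ)) (g := μ) fun i _ ↦ hμ i
    simpa only [sum_const, nsmul_eq_mul, mul_one, hcard, one_pow, one_div] using this
  have hinf : ⨅ i, (μ i)⁻¹ ≤ (μ k)⁻¹ := ciInf_le (Finite.bddBelow_range _) k
  have hsplit : ∑ i, (μ i)⁻¹ = (μ k)⁻¹ + ∑ i ∈ univ.erase k, (μ i)⁻¹ :=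
    (add_sum_erase _ _ (mem_univ k)).symm
  have hkey : n * (n - 1) / S ≤ (n - 1) ^ 2 / T := by
    rcases (univ.erase k).eq_empty_or_nonempty with h | h
    · have hn : n - 1 = 0 := by simpa [h] using hcard.symm
      simp [hn]
    · have hT : 0 < T := sum_pos (fun i _ ↦ hμ i) h
      rw [div_le_div_iff₀ hS hT]
      have hn : 0 ≤ n - 1 := by rw [← hcard]; positivity
      nlinarith
  linarith

theorem trace_inv_minus_min_eig_ge_general {X : Matrix (Fin 3) (Fin 3) ℝ}
    (hX : X.PosDef) (K : ℝ) (htr : X.trace = K) :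
    6 / K ≤ (X⁻¹).trace - ⨅ i, hX.1.inv.eigenvalues i ∧
      ((∀ i, hX.1.eigenvalues i = K / 3) →
        (X⁻¹).trace - ⨅ i, hX.1.inv.eigenvalues i = 6 / K) := by
  have hsum : ∑ i, hX.1.eigenvalues i = K := by
    simpa using (hX.1.trace_eq_sum_eigenvalues).symm.trans htr
  have hmin : ⨅ i, hX.1.inv.eigenvalues i = ⨅ i, (hX.1.eigenvalues i)⁻¹ :=
    congrArg sInf (hX.1.range_inv_eigenvalues hX.isUnit)
  rw [hX.1.trace_inv hX.isUnit, hmin, RCLike.ofReal_real_eq_id]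
  refine ⟨?_, fun hall ↦ ?_⟩
  · have h := card_mul_card_sub_one_div_sum_le_sum_inv_sub_iInf_inv hX.eigenvalues_pos
    norm_num [hsum] at h
    exact h
  · simp only [hall, id_eq, ciInf_const, Fin.sum_const, nsmul_eq_mul, inv_div]
    ring

/-- For a 3×3 symmetric positive definite `X` with `tr X = K > 0`,
`tr(X⁻¹) - λ₋(X⁻¹) ≥ 6/K`, with equality when all eigenvalues of `X` equal `K/3`. -/
theorem trace_inv_minus_min_eig_ge {X : Matrix (Fin 3) (Fin 3) ℝ}
    (hX : X.PosDef) (K : ℝ) (hK : 0 < K) (htr : X.trace = K) :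
    6 / K ≤ (X⁻¹).trace - ⨅ i, hX.1.inv.eigenvalues i ∧
      ((∀ i, hX.1.eigenvalues i = K / 3) →
        (X⁻¹).trace - ⨅ i, hX.1.inv.eigenvalues i = 6 / K) :=
  trace_inv_minus_min_eig_ge_general hX K htr
end

section
/- Let r₁,…,r_N ∈ ℝ³ with Σᵢ rᵢ = 0 and C = Σᵢ rᵢrᵢᵀ positive definite. Then tr(C⁻¹) - λ₋(C⁻¹) ≥ 6 / Σᵢ ‖rᵢ‖₂², and if ‖rᵢ‖₂ ≤ r_max for all i, then tr(C⁻¹) - λ₋(C⁻¹) ≥ 6/(N r_max²). -/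
/-!
Write `ν` for the eigenvalues of `C⁻¹`. Then `tr C = Σᵢ ‖rᵢ‖² = Σ ν⁻¹` and
`tr C⁻¹ - λ₋(C⁻¹) = Σ ν - min ν`.
If `m = min ν` and `S`, `T` are the sums of the other `n - 1` eigenvalues and of their inverses,
Cauchy–Schwarz gives `S T ≥ (n - 1)²` and `S ≥ (n - 1) m`, so
`(Σ ν - m) (Σ ν⁻¹) = S T + S / m ≥ n (n - 1)`, which is `6` for `n = 3`.
-/

open Matrix Finset
open scoped ComplexOrder

theorem card_mul_card_sub_one_div_sum_inv_le_sum_sub_iInf {ι : Type*} [Fintype ι] [Nonempty ι]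
    {f : ι → ℝ} (hf : ∀ i, 0 < f i) :
    (Fintype.card ι * (Fintype.card ι - 1)) / ∑ i, (f i)⁻¹ ≤ ∑ i, f i - ⨅ i, f i := by
  classical
  obtain ⟨j, hj⟩ := Finite.exists_min f
  have hinf : ⨅ i, f i = f j := le_antisymm (ciInf_le (Finite.bddBelow_range f) j) (le_ciInf hj)
  set t := univ.erase j
  have hm : (#t : ℝ) = Fintype.card ι - 1 := cast_card_erase_of_mem (mem_univ j)
  have hcauchy : (#t : ℝ) ^ 2 ≤ (∑ i ∈ t, f i) * ∑ i ∈ t, (f i)⁻¹ := by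
    simpa using sum_sq_le_sum_mul_sum_of_sq_le_mul t (r := fun _ => (1 : ℝ))
      (fun i _ => (hf i).le) (fun i _ => (inv_pos.2 (hf i)).le)
      (fun i _ => by simp [mul_inv_cancel₀ (hf i).ne'])
  have hmin : #t ≤ (∑ i ∈ t, f i) * (f j)⁻¹ := by
    rw [← div_eq_mul_inv, le_div_iff₀ (hf j)]
    simpa using card_nsmul_le_sum t f (f j) fun i _ => hj i
  have hsum_inv_pos : 0 < (f j)⁻¹ + ∑ i ∈ t, (f i)⁻¹ :=
    add_pos_of_pos_of_nonneg (inv_pos.2 (hf j)) (sum_nonneg fun i _ => (inv_pos.2 (hf i)).le)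
  have hcard : (Fintype.card ι : ℝ) = #t + 1 := by rw [hm]; ring
  rw [← add_sum_erase _ _ (mem_univ j), ← add_sum_erase _ _ (mem_univ j), hinf,
    add_sub_cancel_left, div_le_iff₀ hsum_inv_pos, ← hm, hcard]
  linarith

namespace Matrix.IsHermitian

variable {n 𝕜 : Type*} [Fintype n] [DecidableEq n] [RCLike 𝕜] {A : Matrix n n 𝕜}

theorem inv_eq_conjStarAlgAut_diagonal (hA : A.IsHermitian) (h : ∀ i, hA.eigenvalues i ≠ 0) :
    A⁻¹ = Unitary.conjStarAlgAut 𝕜 _ hA.eigenvectorUnitary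
      (diagonal fun i => (hA.eigenvalues i : 𝕜)⁻¹) := by
  set U := Unitary.conjStarAlgAut 𝕜 _ hA.eigenvectorUnitary
  refine inv_eq_right_inv ?_
  calc A * U (diagonal fun i => (hA.eigenvalues i : 𝕜)⁻¹)
      = U (diagonal (RCLike.ofReal ∘ hA.eigenvalues) *
          diagonal fun i => (hA.eigenvalues i : 𝕜)⁻¹) := by
        rw [map_mul, ← hA.spectral_theorem]
    _ = 1 := by
        rw [diagonal_mul_diagonal, ← map_one U, ← diagonal_one]
        congr 2
        funext i
        exact mul_inv_cancel₀ (RCLike.ofReal_ne_zero.mpr (h i))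

theorem trace_inv_eq_sum_inv_eigenvalues (hA : A.IsHermitian) (h : ∀ i, hA.eigenvalues i ≠ 0) :
    A⁻¹.trace = ∑ i, (hA.eigenvalues i : 𝕜)⁻¹ := by
  rw [hA.inv_eq_conjStarAlgAut_diagonal h, Unitary.conjStarAlgAut_apply, trace_mul_cycle,
    Unitary.coe_star_mul_self, one_mul, trace_diagonal]

end Matrix.IsHermitian

theorem Matrix.PosDef.trace_eq_sum_inv_eigenvalues_inv {n 𝕜 : Type*} [Fintype n] [DecidableEq n]
    [RCLike 𝕜] {A : Matrix n n 𝕜} (hA : A.PosDef) :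
    A.trace = ∑ i, (hA.1.inv.eigenvalues i : 𝕜)⁻¹ := by
  conv_lhs => rw [← nonsing_inv_nonsing_inv A hA.det_pos.ne'.isUnit]
  exact hA.1.inv.trace_inv_eq_sum_inv_eigenvalues fun i => (hA.inv.eigenvalues_pos i).ne'

theorem rndop_universal_lower_bounds_general {N : ℕ} (r : Fin N → Fin 3 → ℝ)
    (C : Matrix (Fin 3) (Fin 3) ℝ) (hCdef : C = ∑ i, vecMulVec (r i) (r i))
    (hC : C.PosDef) :
    6 / (∑ i, r i ⬝ᵥ r i) ≤ (C⁻¹).trace - ⨅ i, hC.1.inv.eigenvalues i ∧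
      ∀ rmax : ℝ, 0 < rmax → (∀ i, r i ⬝ᵥ r i ≤ rmax ^ 2) →
        6 / ((N : ℝ) * rmax ^ 2) ≤ (C⁻¹).trace - ⨅ i, hC.1.inv.eigenvalues i := by
  have htrace : C.trace = ∑ i, r i ⬝ᵥ r i := by
    simp only [hCdef, trace_sum, trace_vecMulVec]
  have hbound : 6 / (∑ i, r i ⬝ᵥ r i) ≤ (C⁻¹).trace - ⨅ i, hC.1.inv.eigenvalues i := by
    rw [← htrace, hC.trace_eq_sum_inv_eigenvalues_inv, hC.1.inv.trace_eq_sum_eigenvalues]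
    have h := card_mul_card_sub_one_div_sum_inv_le_sum_sub_iInf hC.inv.eigenvalues_pos
    norm_num at h
    simpa using h
  refine ⟨hbound, fun rmax _ hle => le_trans ?_ hbound⟩
  have hpos : 0 < ∑ i, r i ⬝ᵥ r i := htrace ▸ hC.trace_pos
  gcongr
  calc ∑ i, r i ⬝ᵥ r i ≤ ∑ _i : Fin N, rmax ^ 2 := sum_le_sum fun i _ => hle i
    _ = N * rmax ^ 2 := by simp

/-- Lower bounds on the squared minimax 3D RNDOP: for centroid-zero anchors `rᵢ` with
`C = Σᵢ rᵢrᵢᵀ ≻ 0`, `tr(C⁻¹) - λ₋(C⁻¹) ≥ 6/Σᵢ‖rᵢ‖²`, and if `‖rᵢ‖ ≤ r_max` for all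
`i` then also `tr(C⁻¹) - λ₋(C⁻¹) ≥ 6/(N r_max²)`. -/
theorem rndop_universal_lower_bounds {N : ℕ} (r : Fin N → Fin 3 → ℝ)
    (hsum : ∑ i, r i = 0)
    (C : Matrix (Fin 3) (Fin 3) ℝ) (hCdef : C = ∑ i, vecMulVec (r i) (r i))
    (hC : C.PosDef) :
    6 / (∑ i, r i ⬝ᵥ r i) ≤ (C⁻¹).trace - ⨅ i, hC.1.inv.eigenvalues i ∧
      ∀ rmax : ℝ, 0 < rmax → (∀ i, r i ⬝ᵥ r i ≤ rmax ^ 2) →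
        6 / ((N : ℝ) * rmax ^ 2) ≤ (C⁻¹).trace - ⨅ i, hC.1.inv.eigenvalues i :=
  rndop_universal_lower_bounds_general r C hCdef hC
end
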